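/- Let m ∈ ℝ^p, let d be a symmetric positive semidefinite p×p matrix, and for each i ∈ [K] suppose μ_i(m,d) = 0, σ_iσ_i^⊤(m,d) = −b_i(m,d), and f_i(m,d) = ∫_ℝ r_i(c_i^⊤m + (c_i^⊤ d c_i + ρ_i²)^{1/2} z) φ(z) dz, where c_i ∈ ℝ^p, ρ_i² > 0, φ(z) = (2π)^{−1/2}e^{−z²/2}, and r_i : ℝ → ℝ is twice continuously differentiable with r_i, r_i', r_i'' of at most polynomial growth (so the integrals converge and differentiation under the integral sign is valid). Then for every i ∈ [K] and λ > 0, L^λ_i(m,d) = (1/(2λ)) ⟨ ∑_{j,k=1}^K η^λ_{jk}(f(m,d)) (∂_m f_j(m,d)) (∂_m f_k(m,d))^⊤ ; σ_iσ_i^⊤(m,d) ⟩. -/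

import Mathlib

open MeasureTheory

noncomputable section

namespace ARC

variable {K p : ℕ}

/-- Standard Gaussian density. -/
def gauss (x : ℝ) : ℝ := (Real.sqrt (2 * Real.pi))⁻¹ * Real.exp (-x ^ 2 / 2)

/-- `ν^λ(a) = (∂_a S)(a/λ)`. -/
def nu (S : (Fin K → ℝ) → ℝ) (lam : ℝ) (a : Fin K → ℝ) : Fin K → ℝ :=
  fun j => fderiv ℝ S (lam⁻¹ • a) (Pi.single j 1)

/-- `η^λ(a) = (∂²_a S)(a/λ)`. -/
def eta (S : (Fin K → ℝ) → ℝ) (lam : ℝ) (a : Fin K → ℝ) : Fin K → Fin K → ℝ :=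
  fun j k => fderiv ℝ (fun x => fderiv ℝ S x (Pi.single k 1)) (lam⁻¹ • a) (Pi.single j 1)

/-- The maximum of a vector `a : Fin K → ℝ` (needs `0 < K`). -/
def fmax (hK : 0 < K) (a : Fin K → ℝ) : ℝ :=
  Finset.univ.sup' ⟨⟨0, hK⟩, Finset.mem_univ _⟩ a

/-- A smooth max approximator. -/
structure IsSmoothMax (hK : 0 < K) (S : (Fin K → ℝ) → ℝ) : Prop where
  smooth : ContDiff ℝ 3 S
  bddDeriv : ∃ C : ℝ, ∀ x, ∀ k ∈ ({1, 2, 3} : Finset ℕ), ‖iteratedFDeriv ℝ k S x‖ ≤ C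
  mono : Monotone S
  translate : ∀ (a : Fin K → ℝ) (c : ℝ), S (fun i => a i + c) = S a + c
  convex : ConvexOn ℝ Set.univ S
  approx : ∀ ε > (0 : ℝ), ∃ δ > (0 : ℝ), ∀ lam : ℝ, 0 < lam → lam < δ →
    ∀ a : Fin K → ℝ, |lam * S (lam⁻¹ • a) - fmax hK a| ≤ ε

/-- Partial gradient in `m` of `f_j` (matrix-valued `d`). -/
def gradMm (f : Fin K → (Fin p → ℝ) → (Fin p → Fin p → ℝ) → ℝ) (j : Fin K)
    (m : Fin p → ℝ) (d : Fin p → Fin p → ℝ) : Fin p → ℝ :=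
  fun k => fderiv ℝ (fun m' => f j m' d) m (Pi.single k 1)

/-- Partial gradient in the matrix variable `d` of `f_j`, as a `p × p` matrix. -/
def gradDm (f : Fin K → (Fin p → ℝ) → (Fin p → Fin p → ℝ) → ℝ) (j : Fin K)
    (m : Fin p → ℝ) (d : Fin p → Fin p → ℝ) : Fin p → Fin p → ℝ :=
  fun k l => fderiv ℝ (fun d' => f j m d') d (Pi.single k (Pi.single l 1))

/-- Hessian in `m` of `f_j`, as a `p × p` matrix (matrix-valued `d`). -/
def hessMm (f : Fin K → (Fin p → ℝ) → (Fin p → Fin p → ℝ) → ℝ) (j : Fin K)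
    (m : Fin p → ℝ) (d : Fin p → Fin p → ℝ) : Fin p → Fin p → ℝ :=
  fun k l =>
    fderiv ℝ (fun m' => fderiv ℝ (fun m'' => f j m'' d) m' (Pi.single l 1)) m (Pi.single k 1)

/-- The learning premium `L^λ(m,d) ∈ ℝ^K` in the case where the `d`-variable is a
`p × p` matrix, parametrised by the softmax `nuF` and its derivative `etaF`
(both already evaluated at scale `λ`), with `σσᵀ` supplied as `ssT`. -/
def Lmat (nuF : (Fin K → ℝ) → Fin K → ℝ) (etaF : (Fin K → ℝ) → Fin K → Fin K → ℝ)
    (lam : ℝ) (f : Fin K → (Fin p → ℝ) → (Fin p → Fin p → ℝ) → ℝ)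
    (μ : Fin K → (Fin p → ℝ) → (Fin p → Fin p → ℝ) → Fin p → ℝ)
    (b ssT : Fin K → (Fin p → ℝ) → (Fin p → Fin p → ℝ) → Fin p → Fin p → ℝ)
    (m : Fin p → ℝ) (d : Fin p → Fin p → ℝ) : Fin K → ℝ :=
  fun i =>
    (∑ k, ∑ l, (∑ j, nuF (fun j' => f j' m d) j * gradDm f j m d k l) * b i m d k l) +
    (∑ k, (∑ j, nuF (fun j' => f j' m d) j * gradMm f j m d k) * μ i m d k) +
    (1 / 2) * ∑ k, ∑ l,
      ((∑ j, nuF (fun j' => f j' m d) j * hessMm f j m d k l) +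
        lam⁻¹ * ∑ j, ∑ j', etaF (fun j'' => f j'' m d) j j' *
          gradMm f j m d k * gradMm f j' m d l) *
      ssT i m d k l

/-- Polynomial growth of `r` together with its first two derivatives. -/
def PolyGrowth2 (r : ℝ → ℝ) : Prop :=
  ∃ (C : ℝ) (n : ℕ), ∀ x : ℝ,
    |r x| ≤ C * (1 + |x|) ^ n ∧ |deriv r x| ≤ C * (1 + |x|) ^ n ∧
    |deriv (deriv r) x| ≤ C * (1 + |x|) ^ n

/-! Each `f_j(m, d) = 𝔼[r_j(c_jᵀm + √v Z)]`, `v = c_jᵀ d c_j + ρ_j²`, solves the heat equation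
`∂_v f_j = ½ ∂²_a f_j` in `a = c_jᵀm`: differentiating under the integral sign gives
`∂_s 𝔼[r(a + sZ)] = 𝔼[r'(a + sZ) Z]`, and Gaussian integration by parts turns this into
`s 𝔼[r''(a + sZ)]`. By the chain rule `∂_d f_j = ½ c_j c_jᵀ ∂²_a f_j = ½ ∂²_m f_j`, so with
`μ_i = 0` and `b_i = -σ_iσ_iᵀ` the drift term of `L^λ_i` cancels the `ν`-Hessian term. -/

open Filter

lemma gauss_pos (x : ℝ) : 0 < gauss x := by
  unfold gauss; positivity

lemma continuous_gauss : Continuous gauss := by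
  unfold gauss; fun_prop

lemma hasDerivAt_gauss (x : ℝ) : HasDerivAt gauss (-x * gauss x) x := by
  have h := (((hasDerivAt_pow 2 x).neg.div_const 2).exp).const_mul (Real.sqrt (2 * Real.pi))⁻¹
  exact h.congr_deriv (by simp only [gauss, Pi.neg_apply]; push_cast; ring)

lemma integrable_one_add_abs_pow_mul_gauss (n : ℕ) :
    Integrable (fun x : ℝ => (1 + |x|) ^ n * gauss x) := by
  have abs_pow : ∀ k : ℕ, Integrable (fun x : ℝ => |x| ^ k * gauss x) := fun k => by
    have h := (integrable_rpow_mul_exp_neg_mul_sq (b := 1 / 2) (by norm_num)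
      (s := k) (by linarith [k.cast_nonneg (α := ℝ)])).const_mul (Real.sqrt (2 * Real.pi))⁻¹
    refine h.abs.congr (Eventually.of_forall fun x => ?_)
    simp only [Real.rpow_natCast, abs_mul, abs_pow, abs_of_pos (Real.exp_pos _), abs_inv,
      abs_of_pos (Real.sqrt_pos.2 Real.two_pi_pos), gauss]
    ring_nf
  have binomial : (fun x : ℝ => (1 + |x|) ^ n * gauss x)
      = fun x => ∑ k ∈ Finset.range (n + 1), (n.choose k : ℝ) * (|x| ^ k * gauss x) := by
    funext x
    rw [add_comm, add_pow, Finset.sum_mul]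
    exact Finset.sum_congr rfl fun k _ => by ring
  rw [binomial]
  exact integrable_finsetSum _ fun k _ => (abs_pow k).const_mul _

def PolyBound (C : ℝ) (n : ℕ) (u : ℝ → ℝ) : Prop :=
  ∀ x, |u x| ≤ C * (1 + |x|) ^ n

namespace PolyBound

variable {u : ℝ → ℝ} {C : ℝ} {n : ℕ}

lemma nonneg (h : PolyBound C n u) : 0 ≤ C := by
  simpa using (abs_nonneg (u 0)).trans (h 0)

lemma comp_affine (h : PolyBound C n u) {a s A S : ℝ} (ha : |a| ≤ A) (hs : |s| ≤ S) :
    PolyBound (C * (1 + A + S) ^ n) n (fun x => u (a + s * x)) := fun x => by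
  have hle : 1 + |a + s * x| ≤ (1 + A + S) * (1 + |x|) := by
    have := abs_add_le a (s * x)
    rw [abs_mul] at this
    nlinarith [abs_nonneg a, abs_nonneg s, abs_nonneg x]
  calc |u (a + s * x)| ≤ C * (1 + |a + s * x|) ^ n := h _
    _ ≤ C * ((1 + A + S) * (1 + |x|)) ^ n :=
        mul_le_mul_of_nonneg_left (pow_le_pow_left₀ (by positivity) hle n) h.nonneg
    _ = C * (1 + A + S) ^ n * (1 + |x|) ^ n := by rw [mul_pow, mul_assoc]

lemma mul_id (h : PolyBound C n u) : PolyBound C (n + 1) (fun x => u x * x) := fun x => by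
  rw [abs_mul, pow_succ, ← mul_assoc]
  exact mul_le_mul (h x) (by linarith) (abs_nonneg x) (mul_nonneg h.nonneg (by positivity))

lemma norm_mul_gauss_le (h : PolyBound C n u) (x : ℝ) :
    ‖u x * gauss x‖ ≤ C * ((1 + |x|) ^ n * gauss x) := by
  rw [Real.norm_eq_abs, abs_mul, abs_of_pos (gauss_pos x), ← mul_assoc]
  exact mul_le_mul_of_nonneg_right (h x) (gauss_pos x).le

lemma integrable_mul_gauss (h : PolyBound C n u) (hu : Continuous u) :
    Integrable (fun x => u x * gauss x) :=
  ((integrable_one_add_abs_pow_mul_gauss n).const_mul C).mono'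
    (hu.mul continuous_gauss).aestronglyMeasurable (Eventually.of_forall h.norm_mul_gauss_le)

end PolyBound

lemma abs_le_of_mem_ball_one {x x₀ : ℝ} (hx : x ∈ Metric.ball x₀ 1) : |x| ≤ |x₀| + 1 := by
  have := abs_sub_abs_le_abs_sub x x₀
  rw [Metric.mem_ball, Real.dist_eq] at hx
  linarith

/-- Gaussian integration by parts (Stein's lemma). -/
lemma integral_mul_id_mul_gauss {g g' : ℝ → ℝ} (hg : ∀ x, HasDerivAt g (g' x) x)
    (hg_id : Integrable (fun x => g x * x * gauss x)) (hg' : Integrable (fun x => g' x * gauss x))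
    (hg_gauss : Integrable (fun x => g x * gauss x)) :
    ∫ x, g x * x * gauss x = ∫ x, g' x * gauss x := by
  have h := integral_mul_deriv_eq_deriv_mul_of_integrable (u := g) (v := gauss)
    (fun x _ => hg x) (fun x _ => hasDerivAt_gauss x)
    (by simpa [Pi.mul_def, mul_assoc, mul_comm, mul_left_comm] using hg_id.neg)
    hg' hg_gauss
  simp only [mul_neg, neg_mul, integral_neg, neg_inj] at h
  simpa [mul_assoc] using h

/-- `gaussSmooth u a s = 𝔼[u (a + s Z)]` for a standard normal `Z`. -/
def gaussSmooth (u : ℝ → ℝ) (a s : ℝ) : ℝ := ∫ x, u (a + s * x) * gauss x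

section gaussSmooth

variable {u : ℝ → ℝ} {C : ℝ} {n : ℕ}

lemma hasDerivAt_gaussSmooth_fst (hu : ContDiff ℝ 1 u) (h₀ : PolyBound C n u)
    (h₁ : PolyBound C n (deriv u)) (s a₀ : ℝ) :
    HasDerivAt (fun a => gaussSmooth u a s) (gaussSmooth (deriv u) a₀ s) a₀ := by
  have hu' : Continuous (deriv u) := hu.continuous_deriv le_rfl
  refine (hasDerivAt_integral_of_dominated_loc_of_deriv_le
    (F := fun a x => u (a + s * x) * gauss x) (F' := fun a x => deriv u (a + s * x) * gauss x)
    (Metric.ball_mem_nhds a₀ one_pos)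
    (Eventually.of_forall fun a => ((hu.continuous.comp (by fun_prop)).mul
      continuous_gauss).aestronglyMeasurable)
    ((h₀.comp_affine le_rfl le_rfl).integrable_mul_gauss (by fun_prop))
    ((hu'.comp (by fun_prop)).mul continuous_gauss).aestronglyMeasurable
    (Eventually.of_forall fun x a ha =>
      (h₁.comp_affine (abs_le_of_mem_ball_one ha) le_rfl).norm_mul_gauss_le x)
    ((integrable_one_add_abs_pow_mul_gauss n).const_mul _)
    (Eventually.of_forall fun x a _ => ?_)).2
  have h := (hu.differentiable one_ne_zero (a + s * x)).hasDerivAt.comp a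
    ((hasDerivAt_id a).add_const (s * x))
  simpa using h.mul_const (gauss x)

lemma hasDerivAt_gaussSmooth_snd (hu : ContDiff ℝ 1 u) (h₀ : PolyBound C n u)
    (h₁ : PolyBound C n (deriv u)) (a s₀ : ℝ) :
    HasDerivAt (fun s => gaussSmooth u a s) (∫ x, deriv u (a + s₀ * x) * x * gauss x) s₀ := by
  have hu' : Continuous (deriv u) := hu.continuous_deriv le_rfl
  refine (hasDerivAt_integral_of_dominated_loc_of_deriv_le
    (F := fun s x => u (a + s * x) * gauss x) (F' := fun s x => deriv u (a + s * x) * x * gauss x)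
    (Metric.ball_mem_nhds s₀ one_pos)
    (Eventually.of_forall fun s => ((hu.continuous.comp (by fun_prop)).mul
      continuous_gauss).aestronglyMeasurable)
    ((h₀.comp_affine le_rfl le_rfl).integrable_mul_gauss (by fun_prop))
    (((hu'.comp (by fun_prop)).mul continuous_id).mul continuous_gauss).aestronglyMeasurable
    (Eventually.of_forall fun x s hs =>
      (h₁.comp_affine le_rfl (abs_le_of_mem_ball_one hs)).mul_id.norm_mul_gauss_le x)
    ((integrable_one_add_abs_pow_mul_gauss (n + 1)).const_mul _)
    (Eventually.of_forall fun x s _ => ?_)).2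
  have h := (hu.differentiable one_ne_zero (a + s * x)).hasDerivAt.comp s
    (((hasDerivAt_id s).mul_const x).const_add a)
  simpa [mul_assoc] using h.mul_const (gauss x)

lemma hasDerivAt_gaussSmooth_snd_eq_mul (hu : ContDiff ℝ 2 u) (h₀ : PolyBound C n u)
    (h₁ : PolyBound C n (deriv u)) (h₂ : PolyBound C n (deriv (deriv u))) (a s₀ : ℝ) :
    HasDerivAt (fun s => gaussSmooth u a s) (s₀ * gaussSmooth (deriv (deriv u)) a s₀) s₀ := by
  have hu' : ContDiff ℝ 1 (deriv u) := ContDiff.deriv' (n := 1) hu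
  refine (hasDerivAt_gaussSmooth_snd (hu.of_le one_le_two) h₀ h₁ a s₀).congr_deriv ?_
  have hg (x : ℝ) : HasDerivAt (fun x => deriv u (a + s₀ * x))
      (s₀ * deriv (deriv u) (a + s₀ * x)) x := by
    have h := (hu'.differentiable one_ne_zero (a + s₀ * x)).hasDerivAt.comp x
      (((hasDerivAt_id x).const_mul s₀).const_add a)
    simpa [Function.comp_def, mul_comm] using h
  have hu'' : Continuous (deriv (deriv u)) := hu'.continuous_deriv le_rfl
  rw [integral_mul_id_mul_gauss hg
    ((h₁.comp_affine le_rfl le_rfl).mul_id.integrable_mul_gauss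
      ((hu'.continuous.comp (by fun_prop)).mul continuous_id))
    (by simpa only [mul_assoc] using
      ((h₂.comp_affine le_rfl le_rfl).integrable_mul_gauss (hu''.comp (by fun_prop))).const_mul s₀)
    ((h₁.comp_affine le_rfl le_rfl).integrable_mul_gauss (hu'.continuous.comp (by fun_prop)))]
  simp only [gaussSmooth, mul_assoc, integral_const_mul]

lemma hasDerivAt_gaussSmooth_sqrt (hu : ContDiff ℝ 2 u) (h₀ : PolyBound C n u)
    (h₁ : PolyBound C n (deriv u)) (h₂ : PolyBound C n (deriv (deriv u))) (a : ℝ) {v : ℝ}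
    (hv : 0 < v) :
    HasDerivAt (fun w => gaussSmooth u a (Real.sqrt w))
      (gaussSmooth (deriv (deriv u)) a (Real.sqrt v) / 2) v := by
  refine ((hasDerivAt_gaussSmooth_snd_eq_mul hu h₀ h₁ h₂ a _).comp v
    (Real.hasDerivAt_sqrt hv.ne')).congr_deriv ?_
  field_simp

end gaussSmooth

section partialDeriv

variable {ι : Type*} [Fintype ι] [DecidableEq ι] {G : ℝ → ℝ} {G' : ℝ}

lemma fderiv_comp_apply {E : Type*} [NormedAddCommGroup E] [NormedSpace ℝ E] {φ : E → ℝ}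
    {φ' : E →L[ℝ] ℝ} {x : E} (hφ : HasFDerivAt φ φ' x) (hG : HasDerivAt G G' (φ x)) (v : E) :
    fderiv ℝ (fun y => G (φ y)) x v = G' * φ' v := by
  have h : HasFDerivAt (fun y => G (φ y)) (G' • φ') x := hG.comp_hasFDerivAt x hφ
  rw [h.fderiv, smul_apply, smul_eq_mul]

lemma fderiv_comp_sum_mul_single (c m : ι → ℝ) (hG : HasDerivAt G G' (∑ u, c u * m u))
    (k : ι) :
    fderiv ℝ (fun m' : ι → ℝ => G (∑ u, c u * m' u)) m (Pi.single k 1) = G' * c k := by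
  rw [fderiv_comp_apply (HasFDerivAt.fun_sum fun u _ =>
    (hasFDerivAt_apply u m).const_mul (c u)) hG]
  simp [Pi.single_apply]

lemma fderiv_comp_quadForm_single (c : ι → ℝ) (d : ι → ι → ℝ)
    (hG : HasDerivAt G G' (∑ u, ∑ v, c u * d u v * c v)) (k l : ι) :
    fderiv ℝ (fun d' : ι → ι → ℝ => G (∑ u, ∑ v, c u * d' u v * c v)) d
      (Pi.single k (Pi.single l 1)) = G' * (c k * c l) := by
  have hentry (u v : ι) : HasFDerivAt (fun d' : ι → ι → ℝ => d' u v)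
      ((ContinuousLinearMap.proj v : (ι → ℝ) →L[ℝ] ℝ).comp (ContinuousLinearMap.proj u)) d :=
    (hasFDerivAt_apply v (d u)).comp (g := fun x : ι → ℝ => x v) d (hasFDerivAt_apply u d)
  rw [fderiv_comp_apply (HasFDerivAt.fun_sum fun u _ => HasFDerivAt.fun_sum fun v _ =>
    ((hentry u v).const_mul (c u)).mul_const (c v)) hG]
  simp [Pi.single_apply, ite_apply, mul_comm]

end partialDeriv

section gaussSmoothPartial

variable {ι : Type*} [Fintype ι] [DecidableEq ι] {r : ℝ → ℝ} {C : ℝ} {n : ℕ}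

lemma fderiv_fderiv_gaussSmooth_sum_mul (hr : ContDiff ℝ 2 r) (h₀ : PolyBound C n r)
    (h₁ : PolyBound C n (deriv r)) (h₂ : PolyBound C n (deriv (deriv r))) (c m : ι → ℝ) (s : ℝ)
    (k l : ι) :
    fderiv ℝ (fun m' => fderiv ℝ (fun m'' => gaussSmooth r (∑ u, c u * m'' u) s) m'
      (Pi.single l 1)) m (Pi.single k 1) =
      gaussSmooth (deriv (deriv r)) (∑ u, c u * m u) s * (c k * c l) := by
  have inner : (fun m' => fderiv ℝ (fun m'' => gaussSmooth r (∑ u, c u * m'' u) s) m'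
      (Pi.single l 1)) = fun m' => c l * gaussSmooth (deriv r) (∑ u, c u * m' u) s :=
    funext fun m' => by
      rw [fderiv_comp_sum_mul_single c m'
        (hasDerivAt_gaussSmooth_fst (hr.of_le one_le_two) h₀ h₁ s _), mul_comm]
  rw [inner, fderiv_comp_sum_mul_single c m
    ((hasDerivAt_gaussSmooth_fst (ContDiff.deriv' (n := 1) hr) h₁ h₂ s _).const_mul (c l))]
  ring

lemma fderiv_gaussSmooth_sqrt_quadForm (hr : ContDiff ℝ 2 r) (h₀ : PolyBound C n r)
    (h₁ : PolyBound C n (deriv r)) (h₂ : PolyBound C n (deriv (deriv r))) (a ρ : ℝ)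
    (c : ι → ℝ) (d : ι → ι → ℝ) (hpos : 0 < (∑ u, ∑ v, c u * d u v * c v) + ρ) (k l : ι) :
    fderiv ℝ (fun d' : ι → ι → ℝ =>
        gaussSmooth r a (Real.sqrt ((∑ u, ∑ v, c u * d' u v * c v) + ρ))) d
      (Pi.single k (Pi.single l 1)) =
      gaussSmooth (deriv (deriv r)) a (Real.sqrt ((∑ u, ∑ v, c u * d u v * c v) + ρ)) / 2 *
        (c k * c l) :=
  fderiv_comp_quadForm_single c d
    ((hasDerivAt_gaussSmooth_sqrt hr h₀ h₁ h₂ a hpos).comp_add_const _ ρ) k l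

end gaussSmoothPartial

lemma Lmat_eq_of_gradDm_eq_hessMm_div_two {K p : ℕ} (nuF : (Fin K → ℝ) → Fin K → ℝ)
    (etaF : (Fin K → ℝ) → Fin K → Fin K → ℝ) (lam : ℝ)
    (f : Fin K → (Fin p → ℝ) → (Fin p → Fin p → ℝ) → ℝ)
    (μ : Fin K → (Fin p → ℝ) → (Fin p → Fin p → ℝ) → Fin p → ℝ)
    (b ssT : Fin K → (Fin p → ℝ) → (Fin p → Fin p → ℝ) → Fin p → Fin p → ℝ)
    (m : Fin p → ℝ) (d : Fin p → Fin p → ℝ) (i : Fin K) (hμ : μ i m d = 0)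
    (hssT : ∀ k l, ssT i m d k l = -(b i m d k l))
    (hf : ∀ j k l, gradDm f j m d k l = hessMm f j m d k l / 2) :
    Lmat nuF etaF lam f μ b ssT m d i =
      1 / (2 * lam) * ∑ k, ∑ l,
        (∑ j, ∑ j', etaF (fun j'' => f j'' m d) j j' * gradMm f j m d k * gradMm f j' m d l) *
          ssT i m d k l := by
  have hb (k l : Fin p) : b i m d k l = -ssT i m d k l := by rw [hssT, neg_neg]
  have hsum (k l : Fin p) : ∑ j, nuF (fun j' => f j' m d) j * gradDm f j m d k l =
      (∑ j, nuF (fun j' => f j' m d) j * hessMm f j m d k l) / 2 := by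
    simp only [Finset.sum_div, hf, mul_div_assoc]
  simp only [Lmat, hsum, hb, hμ, Pi.zero_apply, mul_zero, Finset.sum_const_zero, add_zero]
  rw [Finset.mul_sum _ _ (1 / 2), Finset.mul_sum _ _ (1 / (2 * lam)), ← Finset.sum_add_distrib]
  refine Finset.sum_congr rfl fun k _ => ?_
  rw [Finset.mul_sum _ _ (1 / 2), Finset.mul_sum _ _ (1 / (2 * lam)), ← Finset.sum_add_distrib]
  refine Finset.sum_congr rfl fun l _ => ?_
  ring

lemma gradDm_eq_hessMm_div_two {K p : ℕ} {rf : Fin K → ℝ → ℝ} {c : Fin K → Fin p → ℝ}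
    {ρsq : Fin K → ℝ} {f : Fin K → (Fin p → ℝ) → (Fin p → Fin p → ℝ) → ℝ}
    (hf : f = fun i m' d' => gaussSmooth (rf i) (∑ k, c i k * m' k)
      (Real.sqrt ((∑ k, ∑ l, c i k * d' k l * c i l) + ρsq i)))
    {j : Fin K} (hr : ContDiff ℝ 2 (rf j)) (hgrowth : PolyGrowth2 (rf j)) (m : Fin p → ℝ)
    (d : Fin p → Fin p → ℝ) (hpos : 0 < (∑ k, ∑ l, c j k * d k l * c j l) + ρsq j)
    (k l : Fin p) :
    gradDm f j m d k l = hessMm f j m d k l / 2 := by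
  obtain ⟨C, n, hC⟩ := hgrowth
  have h₀ : PolyBound C n (rf j) := fun x => (hC x).1
  have h₁ : PolyBound C n (deriv (rf j)) := fun x => (hC x).2.1
  have h₂ : PolyBound C n (deriv (deriv (rf j))) := fun x => (hC x).2.2
  subst hf
  simp only [gradDm, hessMm]
  rw [fderiv_gaussSmooth_sqrt_quadForm hr h₀ h₁ h₂ _ _ _ _ hpos,
    fderiv_fderiv_gaussSmooth_sum_mul hr h₀ h₁ h₂]
  ring

end ARC

theorem ARC.L_gaussian_reduction_general
    {K p : ℕ}
    (S : (Fin K → ℝ) → ℝ)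
    (m : Fin p → ℝ) (d : Fin p → Fin p → ℝ)
    (hdpsd : ∀ v : Fin p → ℝ, 0 ≤ ∑ k, ∑ l, v k * d k l * v l)
    (c : Fin K → Fin p → ℝ) (ρsq : Fin K → ℝ) (hρ : ∀ i, 0 < ρsq i)
    (rf : Fin K → ℝ → ℝ) (hrf : ∀ i, ContDiff ℝ 2 (rf i))
    (hgrowth : ∀ i, ARC.PolyGrowth2 (rf i))
    (f : Fin K → (Fin p → ℝ) → (Fin p → Fin p → ℝ) → ℝ)
    (hfdef : f = fun i m' d' => ∫ x : ℝ,
      rf i ((∑ k, c i k * m' k) +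
        Real.sqrt ((∑ k, ∑ l, c i k * d' k l * c i l) + ρsq i) * x) * ARC.gauss x)
    (μ : Fin K → (Fin p → ℝ) → (Fin p → Fin p → ℝ) → Fin p → ℝ)
    (b ssT : Fin K → (Fin p → ℝ) → (Fin p → Fin p → ℝ) → Fin p → Fin p → ℝ)
    (hμ : ∀ i, μ i m d = 0)
    (hssT : ∀ i k l, ssT i m d k l = -(b i m d k l)) :
    ∀ (i : Fin K) (lam : ℝ), 0 < lam →
      ARC.Lmat (ARC.nu S lam) (ARC.eta S lam) lam f μ b ssT m d i =
        (1 / (2 * lam)) * ∑ k, ∑ l,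
          (∑ j, ∑ j', ARC.eta S lam (fun j'' => f j'' m d) j j' *
            ARC.gradMm f j m d k * ARC.gradMm f j' m d l) * ssT i m d k l := by
  intro i lam _
  exact ARC.Lmat_eq_of_gradDm_eq_hessMm_div_two _ _ _ _ _ _ _ _ _ i (hμ i) (hssT i)
    fun j k l => ARC.gradDm_eq_hessMm_div_two hfdef (hrf j) (hgrowth j) m d
      (by linarith [hdpsd (c j), hρ j]) k l

/-- Lemma A.4: if `μ_i(m,d) = 0`, `σ_iσ_i^⊤(m,d) = -b_i(m,d)` and
`f_i(m,d) = ∫ r_i(c_i^⊤ m + (c_i^⊤ d c_i + ρ_i²)^{1/2} z) φ(z) dz`, then the learning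
premium reduces to the single `η`-term:
`L^λ_i(m,d) = (2λ)⁻¹ ⟨∑_{j,k} η^λ_{jk}(f)(∂_m f_j)(∂_m f_k)^⊤ ; σ_iσ_i^⊤⟩`. -/
theorem ARC.L_gaussian_reduction
    {K p : ℕ} (hK : 0 < K) (hp : 0 < p)
    (S : (Fin K → ℝ) → ℝ) (hS : ARC.IsSmoothMax hK S)
    (m : Fin p → ℝ) (d : Fin p → Fin p → ℝ)
    (hdsym : ∀ k l, d k l = d l k)
    (hdpsd : ∀ v : Fin p → ℝ, 0 ≤ ∑ k, ∑ l, v k * d k l * v l)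
    (c : Fin K → Fin p → ℝ) (ρsq : Fin K → ℝ) (hρ : ∀ i, 0 < ρsq i)
    (rf : Fin K → ℝ → ℝ) (hrf : ∀ i, ContDiff ℝ 2 (rf i))
    (hgrowth : ∀ i, ARC.PolyGrowth2 (rf i))
    (f : Fin K → (Fin p → ℝ) → (Fin p → Fin p → ℝ) → ℝ)
    (hfdef : f = fun i m' d' => ∫ x : ℝ,
      rf i ((∑ k, c i k * m' k) +
        Real.sqrt ((∑ k, ∑ l, c i k * d' k l * c i l) + ρsq i) * x) * ARC.gauss x)
    (μ : Fin K → (Fin p → ℝ) → (Fin p → Fin p → ℝ) → Fin p → ℝ)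
    (b ssT : Fin K → (Fin p → ℝ) → (Fin p → Fin p → ℝ) → Fin p → Fin p → ℝ)
    (hμ : ∀ i, μ i m d = 0)
    (hssT : ∀ i k l, ssT i m d k l = -(b i m d k l)) :
    ∀ (i : Fin K) (lam : ℝ), 0 < lam →
      ARC.Lmat (ARC.nu S lam) (ARC.eta S lam) lam f μ b ssT m d i =
        (1 / (2 * lam)) * ∑ k, ∑ l,
          (∑ j, ∑ j', ARC.eta S lam (fun j'' => f j'' m d) j j' *
            ARC.gradMm f j m d k * ARC.gradMm f j' m d l) * ssT i m d k l :=
  ARC.L_gaussian_reduction_general S m d hdpsd c ρsq hρ rf hrf hgrowth f hfdef μ b ssT hμ hssT
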